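/- Let X be a digraph on a vertex set V, let F = (V_1,…,V_k) be a composition of V, and let f_F : V → {1,…,k} be the coloring with f_F(v) = j for v ∈ V_j. Then the number of (f_F,X)-friendly V-listings equals the product over i = 1,…,k of the number of V_i-listings τ with (X restricted to V_i) Des(τ) = ∅. -/

import Mathlib

/-!
A friendly listing is weakly increasing in colour, so it is the concatenation of its colour
classes `V_1, …, V_k` in this order, and a list sorted by a key is determined by its fibres.
Inside `V_i` the colour is constant, so friendliness there says that no two neighbours form an
edge, i.e. the class is listed without `X|_{V_i}`-descents; across classes the colour strictly
increases, so every concatenation of descent-free listings of the classes is friendly. Splitting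
a listing into its colour classes is therefore a bijection onto tuples of descent-free listings.
-/

/-- The 1-based `X`-descent set of a listing `l = (σ_1, …, σ_n)`:
the set of `i ∈ [n-1]` with `(σ_i, σ_{i+1}) ∈ E`. -/
def XDes {V : Type*} (E : V → V → Prop) (l : List V) : Set ℕ :=
  {i : ℕ | ∃ (h1 : 1 ≤ i) (h2 : i ≤ l.length - 1),
    E (l.get ⟨i - 1, by omega⟩) (l.get ⟨i, by omega⟩)}

/-- A listing `l = (σ_1, …, σ_n)` is `(f,X)`-friendly if
`f(σ_1) ≤ f(σ_2) ≤ ⋯ ≤ f(σ_n)` and `f(σ_j) < f(σ_{j+1})` for each `j ∈ [n-1]`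
with `(σ_j, σ_{j+1})` an edge of `X`. -/
def Friendly {V : Type*} (E : V → V → Prop) (f : V → ℕ) (l : List V) : Prop :=
  l.Chain' (fun u v => f u ≤ f v) ∧
  ∀ i : ℕ, ∀ (h1 : 1 ≤ i) (h2 : i ≤ l.length - 1),
    E (l.get ⟨i - 1, by omega⟩) (l.get ⟨i, by omega⟩) →
      f (l.get ⟨i - 1, by omega⟩) < f (l.get ⟨i, by omega⟩)

/-- Edge relation of the restriction of the digraph to a subset `S`. -/
def restrictEdge {V : Type*} (E : V → V → Prop) (S : Finset V) (u v : V) : Prop :=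
  u ∈ S ∧ v ∈ S ∧ E u v

namespace List

variable {α β : Type*}

theorem isChain_flatten_of_pairwise {R : α → α → Prop} :
    ∀ {L : List (List α)}, (∀ l ∈ L, l.IsChain R) →
      L.Pairwise (fun l₁ l₂ => ∀ x ∈ l₁, ∀ y ∈ l₂, R x y) → L.flatten.IsChain R
  | [], _, _ => .nil
  | l :: L, hchain, hpair => by
    rw [pairwise_cons] at hpair
    refine (hchain l mem_cons_self).append
      (isChain_flatten_of_pairwise (fun l' hl' => hchain l' (mem_cons_of_mem _ hl')) hpair.2) ?_
    intro x hx y hy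
    obtain ⟨l', hl', hyl'⟩ := mem_flatten.mp (mem_of_mem_head? hy)
    exact hpair.1 l' hl' x (mem_of_mem_getLast? hx) y hyl'

theorem eq_of_pairwise_of_forall_filter_eq [LinearOrder β] {g : α → β} :
    ∀ {l₁ l₂ : List α}, l₁.Pairwise (fun u v => g u ≤ g v) →
      l₂.Pairwise (fun u v => g u ≤ g v) →
      (∀ x, l₁.filter (fun v => g v = g x) = l₂.filter (fun v => g v = g x)) → l₁ = l₂
  | [], [], _, _, _ => rfl
  | [], b :: l₂, _, _, h => by simpa using h b
  | a :: l₁, [], _, _, h => by simpa using h a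
  | a :: l₁, b :: l₂, h₁, h₂, h => by
    have hab : g a = g b := by
      have ha : a ∈ b :: l₂ :=
        mem_of_mem_filter (h a ▸ mem_filter.mpr ⟨mem_cons_self, by simp⟩)
      have hb : b ∈ a :: l₁ :=
        mem_of_mem_filter ((h b).symm ▸ mem_filter.mpr ⟨mem_cons_self, by simp⟩)
      rw [pairwise_cons] at h₁ h₂
      rcases mem_cons.mp ha with rfl | ha
      · rfl
      rcases mem_cons.mp hb with rfl | hb
      · rfl
      exact le_antisymm (h₁.1 b hb) (h₂.1 a ha)
    obtain rfl : a = b := by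
      have := h a
      simp only [filter_cons, hab, decide_true, if_true, cons.injEq] at this
      exact this.1
    have htail : ∀ x, l₁.filter (fun v => g v = g x) = l₂.filter (fun v => g v = g x) := by
      intro x
      by_cases hx : g a = g x <;> simpa [filter_cons, hx] using h x
    rw [eq_of_pairwise_of_forall_filter_eq h₁.of_cons h₂.of_cons htail]

theorem filter_flatten_ofFn_of_forall_eq [DecidableEq β] {g : α → β} :
    ∀ {k : ℕ} {c : Fin k → β}, c.Injective → ∀ {p : Fin k → List α},
      (∀ i, ∀ v ∈ p i, g v = c i) →
      ∀ i, (ofFn p).flatten.filter (fun v => g v = c i) = p i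
  | 0, _, _, _, _, i => i.elim0
  | k + 1, c, hc, p, hp, i => by
    rw [ofFn_succ, flatten_cons, filter_append]
    cases i using Fin.cases with
    | zero =>
      rw [filter_eq_self.mpr fun v hv => by simp [hp 0 v hv], append_right_eq_self,
        filter_eq_nil_iff]
      simp only [mem_flatten, mem_ofFn]
      rintro v ⟨_, ⟨j, rfl⟩, hv⟩
      simp [hp _ v hv, hc.ne (Fin.succ_ne_zero j)]
    | succ i =>
      rw [filter_eq_nil_iff.mpr fun v hv => by
        simp [hp 0 v hv, hc.ne (Fin.succ_ne_zero i).symm], nil_append]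
      exact filter_flatten_ofFn_of_forall_eq (hc.comp (Fin.succ_injective _))
        (fun j => hp j.succ) i

theorem isChain_flatten_ofFn_of_strictMono [Preorder β] {g : α → β} {k : ℕ}
    {c : Fin k → β} (hc : StrictMono c) {p : Fin k → List α}
    (hp : ∀ i, ∀ v ∈ p i, g v = c i)
    {R : α → α → Prop} (hR : ∀ u v, g u < g v → R u v) (hchain : ∀ i, (p i).IsChain R) :
    (ofFn p).flatten.IsChain R := by
  refine isChain_flatten_of_pairwise ?_ (pairwise_ofFn.mpr ?_)
  · intro l hl
    obtain ⟨i, rfl⟩ := mem_ofFn.mp hl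
    exact hchain i
  · intro i j hij u hu v hv
    exact hR u v (by rw [hp i u hu, hp j v hv]; exact hc hij)

theorem flatten_ofFn_filter_eq_self [LinearOrder β] {g : α → β} {k : ℕ} {c : Fin k → β}
    (hc : StrictMono c) {l : List α} (hl : l.Pairwise (fun u v => g u ≤ g v))
    (hrange : ∀ v, ∃ i, g v = c i) :
    (ofFn fun i => l.filter (fun v => g v = c i)).flatten = l := by
  have hblock : ∀ i, ∀ v ∈ l.filter (fun v => g v = c i), g v = c i := fun i v hv => by
    simpa using (mem_filter.mp hv).2
  refine eq_of_pairwise_of_forall_filter_eq ?_ hl fun x => ?_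
  · refine isChain_iff_pairwise.mp (isChain_flatten_ofFn_of_strictMono hc hblock
      (fun _ _ => le_of_lt) fun i => isChain_iff_pairwise.mpr (pairwise_of_forall_mem_list ?_))
    intro u hu v hv
    rw [hblock i u hu, hblock i v hv]
  · obtain ⟨i, hi⟩ := hrange x
    rw [hi, filter_flatten_ofFn_of_forall_eq hc.injective hblock]

end List

open List

theorem forall_adjacent_iff_isChain {α : Type*} {R : α → α → Prop} {l : List α} :
    (∀ i (h1 : 1 ≤ i) (h2 : i ≤ l.length - 1),
      R (l.get ⟨i - 1, by omega⟩) (l.get ⟨i, by omega⟩)) ↔ l.IsChain R := by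
  rw [isChain_iff_getElem]
  constructor
  · intro h i hi
    simpa using h (i + 1) (by omega) (by omega)
  · intro h i h1 h2
    obtain ⟨j, rfl⟩ : ∃ j, i = j + 1 := ⟨i - 1, by omega⟩
    simpa using h j (by omega)

section Listings

variable {V : Type*}

theorem XDes_eq_empty_iff {E : V → V → Prop} {l : List V} :
    XDes E l = ∅ ↔ l.IsChain (fun u v => ¬ E u v) := by
  simp only [← forall_adjacent_iff_isChain, Set.eq_empty_iff_forall_notMem, XDes,
    Set.mem_ofPred_eq, not_exists]

theorem friendly_iff {E : V → V → Prop} {f : V → ℕ} {l : List V} :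
    Friendly E f l ↔
      l.IsChain (fun u v => f u ≤ f v) ∧ l.IsChain (fun u v => E u v → f u < f v) :=
  and_congr Iff.rfl (forall_adjacent_iff_isChain (R := fun u v => E u v → f u < f v))

def IsFriendlyListing (E : V → V → Prop) (f : V → ℕ) (l : List V) : Prop :=
  l.Nodup ∧ (∀ v, v ∈ l) ∧ Friendly E f l

def IsDescentFreeListing (E : V → V → Prop) (S : Finset V) (t : List V) : Prop :=
  t.Nodup ∧ (∀ v, v ∈ t ↔ v ∈ S) ∧ XDes (restrictEdge E S) t = ∅

variable {E : V → V → Prop} {k : ℕ} {F : Fin k → Finset V} {f : V → ℕ}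

theorem mem_iff_eq_val_add_one (hcover : ∀ v, ∃ i, v ∈ F i)
    (hf : ∀ i : Fin k, ∀ v ∈ F i, f v = i + 1)
    {v : V} {i : Fin k} : v ∈ F i ↔ f v = i + 1 := by
  refine ⟨hf i v, fun hv => ?_⟩
  obtain ⟨j, hj⟩ := hcover v
  obtain rfl : j = i := Fin.ext (by have := hf j v hj; omega)
  exact hj

theorem exists_eq_val_add_one (hcover : ∀ v, ∃ i, v ∈ F i)
    (hf : ∀ i : Fin k, ∀ v ∈ F i, f v = i + 1) (v : V) : ∃ i : Fin k, f v = i + 1 := by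
  obtain ⟨i, hi⟩ := hcover v
  exact ⟨i, hf i v hi⟩

theorem IsFriendlyListing.flatten_ofFn_filter (hcover : ∀ v, ∃ i, v ∈ F i)
    (hf : ∀ i : Fin k, ∀ v ∈ F i, f v = i + 1) {l : List V} (hl : IsFriendlyListing E f l) :
    (ofFn fun i : Fin k => l.filter (fun v => f v = i + 1)).flatten = l :=
  flatten_ofFn_filter_eq_self (Fin.val_strictMono.add_const 1)
    (isChain_iff_pairwise.mp (friendly_iff.mp hl.2.2).1) (exists_eq_val_add_one hcover hf)

theorem IsFriendlyListing.filter (hcover : ∀ v, ∃ i, v ∈ F i)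
    (hf : ∀ i : Fin k, ∀ v ∈ F i, f v = i + 1) {l : List V} (hl : IsFriendlyListing E f l)
    (i : Fin k) : IsDescentFreeListing E (F i) (l.filter (fun v => f v = i + 1)) := by
  have hmem : ∀ v, v ∈ l.filter (fun v => f v = i + 1) ↔ v ∈ F i := fun v => by
    simp [hl.2.1, mem_iff_eq_val_add_one hcover hf]
  refine ⟨hl.1.filter _, hmem, XDes_eq_empty_iff.mpr ?_⟩
  have hinf : l.filter (fun v => f v = i + 1) <:+: l := by
    have := infix_of_mem_flatten
      (L := ofFn fun j : Fin k => l.filter (fun v => f v = j + 1)) (mem_ofFn.mpr ⟨i, rfl⟩)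
    rwa [hl.flatten_ofFn_filter hcover hf] at this
  refine ((friendly_iff.mp hl.2.2).2.infix hinf).imp_of_mem_imp
    fun u v hu hv huv ⟨_, _, hE⟩ => ?_
  have := huv hE
  rw [hf i u ((hmem u).mp hu), hf i v ((hmem v).mp hv)] at this
  exact lt_irrefl _ this

theorem IsDescentFreeListing.forall_mem_eq (hf : ∀ i : Fin k, ∀ v ∈ F i, f v = i + 1)
    {t : List V} {i : Fin k} (ht : IsDescentFreeListing E (F i) t) : ∀ v ∈ t, f v = i + 1 :=
  fun v hv => hf i v ((ht.2.1 v).mp hv)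

theorem isFriendlyListing_flatten_ofFn (hcover : ∀ v, ∃ i, v ∈ F i)
    (hf : ∀ i : Fin k, ∀ v ∈ F i, f v = i + 1) {p : Fin k → List V}
    (hp : ∀ i, IsDescentFreeListing E (F i) (p i)) :
    IsFriendlyListing E f (ofFn p).flatten := by
  have hkey : ∀ i, ∀ v ∈ p i, f v = i + 1 := fun i => (hp i).forall_mem_eq hf
  have hc : StrictMono fun i : Fin k => (i : ℕ) + 1 := Fin.val_strictMono.add_const 1
  refine ⟨nodup_flatten.mpr ⟨?_, pairwise_ofFn.mpr ?_⟩, fun v => ?_,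
    friendly_iff.mpr ⟨?_, ?_⟩⟩
  · intro l hl
    obtain ⟨i, rfl⟩ := mem_ofFn.mp hl
    exact (hp i).1
  · intro i j hij v hvi hvj
    exact hc.injective.ne hij.ne ((hkey i v hvi).symm.trans (hkey j v hvj))
  · obtain ⟨i, hi⟩ := hcover v
    exact mem_flatten.mpr ⟨p i, mem_ofFn.mpr ⟨i, rfl⟩, ((hp i).2.1 v).mpr hi⟩
  · refine isChain_flatten_ofFn_of_strictMono hc hkey (fun _ _ => le_of_lt) fun i => ?_
    refine isChain_iff_pairwise.mpr (pairwise_of_forall_mem_list fun u hu v hv => ?_)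
    rw [hkey i u hu, hkey i v hv]
  · refine isChain_flatten_ofFn_of_strictMono hc hkey (fun _ _ h _ => h) fun i => ?_
    refine (XDes_eq_empty_iff.mp (hp i).2.2).imp_of_mem_imp fun u v hu hv hne hE => ?_
    exact (hne ⟨((hp i).2.1 u).mp hu, ((hp i).2.1 v).mp hv, hE⟩).elim

def friendlyListingEquiv (hcover : ∀ v, ∃ i, v ∈ F i)
    (hf : ∀ i : Fin k, ∀ v ∈ F i, f v = i + 1) :
    {l // IsFriendlyListing E f l} ≃ ∀ i, {t // IsDescentFreeListing E (F i) t} where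
  toFun l i := ⟨l.1.filter (fun v => f v = i + 1), l.2.filter hcover hf i⟩
  invFun p := ⟨(ofFn fun i => (p i).1).flatten,
    isFriendlyListing_flatten_ofFn hcover hf fun i => (p i).2⟩
  left_inv l := Subtype.ext (l.2.flatten_ofFn_filter hcover hf)
  right_inv p := funext fun i => Subtype.ext <|
    filter_flatten_ofFn_of_forall_eq (Fin.val_strictMono.add_const 1).injective
      (fun j => (p j).2.forall_mem_eq hf) i

end Listings

theorem card_friendly_eq_prod {V : Type*}
    (E : V → V → Prop)
    {k : ℕ} (F : Fin k → Finset V)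
    (hcover : ∀ v, ∃ i, v ∈ F i)
    (f : V → ℕ) (hf : ∀ (i : Fin k), ∀ v ∈ F i, f v = (i : ℕ) + 1) :
    Nat.card {l : List V // l.Nodup ∧ (∀ v, v ∈ l) ∧ Friendly E f l} =
      ∏ i : Fin k, Nat.card {t : List V // t.Nodup ∧ (∀ v, v ∈ t ↔ v ∈ F i) ∧
        XDes (restrictEdge E (F i)) t = ∅} := by
  rw [← Nat.card_pi]
  exact Nat.card_congr (friendlyListingEquiv hcover hf)
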